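/- (Reduction lemma.) Let n ≥ 3. (i) Given smooth functions L_{n−1} and L̃_{n−1} of (x, p_0, …, p_{n−1}), set f_{n−1} := (−1)^{n−1} ∂_{n−1}^2 ( L̃_{n−1} − D_{n−1} ∫^{p_{n−1}} L_{n−1} ); then there exist smooth functions L_{n−2} and L̃_{n−2} of (x, p_0, …, p_{n−2}) such that E_{2n−2}^n ( L_{n−1} p_n + L̃_{n−1} ) = f_{n−1} p_{2n−2} + (−1)^{n−1} E_{2n−3}^{n−1} ∫^{p_{n−1}}∫ f_{n−1} + E_{2n−4}^{n−1} ( L_{n−2} p_{n−1} + L̃_{n−2} ). (ii) Conversely, given smooth functions f_{n−1}, L_{n−1}, L_{n−2} and L̃_{n−2} (of the variables indicated by their subscripts), there exists a smooth function L̃_{n−1} of (x, p_0, …, p_{n−1}) such that the same identity holds. -/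

import Mathlib

/-!
Common framework: smooth functions of `(x, p₀, p₁, p₂, …)` depending on finitely
many variables, truncated total differential operators `D m`, and truncated
Euler–Lagrange operators `E m n`.
-/

/-- A "function of `(x, p₀, p₁, …)`". -/
abbrev Fn : Type := ℝ → (ℕ → ℝ) → ℝ

/-- Partial derivative in the variable `p k`. -/
noncomputable def pd (k : ℕ) (F : Fn) : Fn :=
  fun x p => deriv (fun t => F x (Function.update p k t)) (p k)

/-- Partial derivative in the variable `x`. -/
noncomputable def pdx (F : Fn) : Fn :=
  fun x p => deriv (fun t => F t p) x

/-- The truncated total differential operator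
`D m = ∂ₓ + p₁ ∂₀ + p₂ ∂₁ + ⋯ + p_m ∂_{m-1}` (for `m = 0` it is just `∂ₓ`). -/
noncomputable def D (m : ℕ) (F : Fn) : Fn :=
  fun x p => pdx F x p + ∑ k ∈ Finset.range m, p (k + 1) * pd k F x p

/-- The `m`-th order Euler–Lagrange operator with `n+1` terms,
`E m n = Σ_{k=0}^n (-1)^k (D m)^k ∂_k`. -/
noncomputable def E (m n : ℕ) (F : Fn) : Fn :=
  fun x p => ∑ k ∈ Finset.range (n + 1), (-1 : ℝ) ^ k * ((D m)^[k] (pd k F)) x p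

/-- `F` depends only on the variables `x, p₀, …, p_{M-1}`. -/
def FnDependsOn (F : Fn) (M : ℕ) : Prop :=
  ∀ (x : ℝ) (p q : ℕ → ℝ), (∀ i, i < M → p i = q i) → F x p = F x q

/-- `F` depends only on `x, p₀, …, p_{M-1}` and is smooth as a function of those
finitely many variables. -/
def SmoothUpTo (F : Fn) (M : ℕ) : Prop :=
  FnDependsOn F M ∧
    ContDiff ℝ (⊤ : ℕ∞) (fun v : ℝ × (Fin M → ℝ) =>
      F v.1 (fun i => if h : i < M then v.2 ⟨i, h⟩ else 0))

/-- `F` is a smooth function depending on finitely many of the variables. -/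
def SmoothFn (F : Fn) : Prop := ∃ M, SmoothUpTo F M

/-- Antiderivative in `p k` vanishing at `p k = 0`:  `∫^{p_k} F`. -/
noncomputable def pint (k : ℕ) (F : Fn) : Fn :=
  fun x p => ∫ t in (0 : ℝ)..(p k), F x (Function.update p k t)

/-- Second antiderivative in `p k`:  `∫^{p_k} ∫ F`. -/
noncomputable def pint2 (k : ℕ) (F : Fn) : Fn := pint k (pint k F)

/-- Antiderivative in `x` vanishing at `x = 0`:  `∫^x F`. -/
noncomputable def xint (F : Fn) : Fn :=
  fun x p => ∫ t in (0 : ℝ)..x, F t p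

/-- `e^{-F}`. -/
noncomputable def negExpF (F : Fn) : Fn := fun x p => Real.exp (-F x p)


open Set Function intervalIntegral
open scoped ENNReal NNReal

noncomputable section PrimAnalytic

variable {H : Type} [NormedAddCommGroup H] [NormedSpace ℝ H]

end PrimAnalytic
section Glue

open Set Function intervalIntegral

variable {H : Type} [NormedAddCommGroup H] [NormedSpace ℝ H]

end Glue
/-! ### Layer 2: representation and basic calculus of `pd`, `pdx` -/

noncomputable section Machinery

open Set Function

/-- Finite-dimensional representation of `F`. -/
def rep (F : Fn) (M : ℕ) : ℝ × (Fin M → ℝ) → ℝ :=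
  fun v : ℝ × (Fin M → ℝ) => F v.1 (fun i => if h : i < M then v.2 ⟨i, h⟩ else 0)

def emb (M : ℕ) (p : ℕ → ℝ) : Fin M → ℝ := fun i => p i

lemma smooth_rep {F : Fn} {M : ℕ} (h : SmoothUpTo F M) : ContDiff ℝ (⊤ : ℕ∞) (rep F M) := h.2

lemma rep_emb {F : Fn} {M : ℕ} (h : FnDependsOn F M) (x : ℝ) (p : ℕ → ℝ) :
    F x p = rep F M (x, emb M p) := by
  apply h
  intro i hi
  simp [rep, emb, dif_pos hi]

lemma emb_update {M k : ℕ} (hk : k < M) (p : ℕ → ℝ) (t : ℝ) :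
    emb M (Function.update p k t) = Function.update (emb M p) ⟨k, hk⟩ t := by
  funext i
  by_cases h : i = (⟨k, hk⟩ : Fin M)
  · subst h; simp [emb]
  · have h' : (i : ℕ) ≠ k := fun hik => h (Fin.ext hik)
    simp [emb, Function.update_apply, h, h']

lemma emb_ext {M : ℕ} (w : Fin M → ℝ) :
    emb M (fun i => if h : i < M then w ⟨i, h⟩ else 0) = w := by
  funext i
  simp [emb, dif_pos i.isLt]

/-- The coordinate curve has the obvious derivative. -/
lemma curve_hasDerivAt {M : ℕ} (j : Fin M) (x : ℝ) (w : Fin M → ℝ) (t₀ : ℝ) :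
    HasDerivAt (fun t => ((x, Function.update w j t) : ℝ × (Fin M → ℝ)))
      ((0, Pi.single j 1) : ℝ × (Fin M → ℝ)) t₀ := by
  apply HasDerivAt.prodMk (hasDerivAt_const t₀ x)
  apply hasDerivAt_pi.mpr
  intro i
  by_cases h : i = j
  · subst h
    simp only [Function.update_self, Pi.single_eq_same]
    exact hasDerivAt_id t₀
  · simp only [Function.update_of_ne h, Pi.single_eq_of_ne h]
    exact hasDerivAt_const t₀ (w i)

lemma hasDerivAt_slice {F : Fn} {M k : ℕ} (hF : SmoothUpTo F M) (hk : k < M)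
    (x : ℝ) (p : ℕ → ℝ) (t₀ : ℝ) :
    HasDerivAt (fun t => F x (Function.update p k t))
      (fderiv ℝ (rep F M) (x, Function.update (emb M p) ⟨k, hk⟩ t₀) ((0, Pi.single ⟨k, hk⟩ 1)))
      t₀ := by
  have heq : (fun t => F x (Function.update p k t)) =
      (rep F M) ∘ (fun t => ((x, Function.update (emb M p) ⟨k, hk⟩ t) : ℝ × (Fin M → ℝ))) := by
    funext t
    show F x (Function.update p k t) = rep F M (x, Function.update (emb M p) ⟨k, hk⟩ t)
    rw [rep_emb hF.1 x (Function.update p k t), emb_update hk]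
  rw [heq]
  have hd : DifferentiableAt ℝ (rep F M)
      ((x, Function.update (emb M p) ⟨k, hk⟩ t₀) : ℝ × (Fin M → ℝ)) :=
    ((smooth_rep hF).differentiable (by simp)).differentiableAt
  exact hd.hasFDerivAt.comp_hasDerivAt t₀ (curve_hasDerivAt ⟨k, hk⟩ x (emb M p) t₀)

lemma pd_eq {F : Fn} {M k : ℕ} (hF : SmoothUpTo F M) (hk : k < M) (x : ℝ) (p : ℕ → ℝ) :
    pd k F x p = fderiv ℝ (rep F M) (x, emb M p) ((0, Pi.single ⟨k, hk⟩ 1)) := by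
  have h := hasDerivAt_slice hF hk x p (p k)
  have hup : Function.update (emb M p) ⟨k, hk⟩ (p k) = emb M p := by
    have : p k = emb M p ⟨k, hk⟩ := rfl
    rw [this, Function.update_eq_self]
  rw [hup] at h
  exact h.deriv

lemma pdx_hasDerivAt {F : Fn} {M : ℕ} (hF : SmoothUpTo F M) (p : ℕ → ℝ) (t₀ : ℝ) :
    HasDerivAt (fun t => F t p)
      (fderiv ℝ (rep F M) (t₀, emb M p) ((1, 0) : ℝ × (Fin M → ℝ))) t₀ := by
  have heq : (fun t => F t p) =
      (rep F M) ∘ (fun t => ((t, emb M p) : ℝ × (Fin M → ℝ))) := by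
    funext t
    exact rep_emb hF.1 t p
  rw [heq]
  have hd : DifferentiableAt ℝ (rep F M) ((t₀, emb M p) : ℝ × (Fin M → ℝ)) :=
    ((smooth_rep hF).differentiable (by simp)).differentiableAt
  exact hd.hasFDerivAt.comp_hasDerivAt t₀
    ((hasDerivAt_id t₀).prodMk (hasDerivAt_const t₀ (emb M p)))

lemma pdx_eq {F : Fn} {M : ℕ} (hF : SmoothUpTo F M) (x : ℝ) (p : ℕ → ℝ) :
    pdx F x p = fderiv ℝ (rep F M) (x, emb M p) ((1, 0) : ℝ × (Fin M → ℝ)) :=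
  (pdx_hasDerivAt hF p x).deriv

lemma pdx_hasDerivAt' {F : Fn} {M : ℕ} (hF : SmoothUpTo F M) (p : ℕ → ℝ) (t₀ : ℝ) :
    HasDerivAt (fun t => F t p) (pdx F t₀ p) t₀ := by
  rw [pdx_eq hF]
  exact pdx_hasDerivAt hF p t₀

/-- `pd k F = 0` for `k ≥ M` when `F` depends only on the first `M` variables. -/
lemma pd_zero {F : Fn} {M k : ℕ} (h : FnDependsOn F M) (hk : M ≤ k) (x : ℝ) (p : ℕ → ℝ) :
    pd k F x p = 0 := by
  have heq : (fun t => F x (Function.update p k t)) = fun _ => F x p := by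
    funext t
    apply h
    intro i hi
    rw [Function.update_apply]
    rw [if_neg]
    omega
  show deriv (fun t => F x (Function.update p k t)) (p k) = 0
  rw [heq, deriv_const]

lemma pd_zero_fn (k : ℕ) (x : ℝ) (p : ℕ → ℝ) : pd k (fun _ _ => (0:ℝ)) x p = 0 := by
  show deriv (fun _ => (0:ℝ)) (p k) = 0
  rw [deriv_const]

lemma pdx_zero_fn (x : ℝ) (p : ℕ → ℝ) : pdx (fun _ _ => (0:ℝ)) x p = 0 := by
  show deriv (fun _ => (0:ℝ)) x = 0
  rw [deriv_const]

/-- Slice `HasDerivAt` at arbitrary base point. -/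
lemma pd_hasDerivAt {F : Fn} {M : ℕ} (hF : SmoothUpTo F M) (k : ℕ) (x : ℝ) (p : ℕ → ℝ)
    (t₀ : ℝ) :
    HasDerivAt (fun t => F x (Function.update p k t)) (pd k F x (Function.update p k t₀)) t₀ := by
  rcases lt_or_ge k M with hk | hk
  · have h := hasDerivAt_slice hF hk x p t₀
    have h2 := pd_eq hF hk x (Function.update p k t₀)
    rw [emb_update hk] at h2
    rw [h2]
    exact h
  · have heq : (fun t => F x (Function.update p k t)) = fun _ => F x p := by
      funext t
      apply hF.1
      intro i hi
      rw [Function.update_apply, if_neg]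
      omega
    rw [pd_zero hF.1 hk]
    rw [heq]
    exact hasDerivAt_const t₀ (F x p)

lemma dependsOn_pd {F : Fn} {M : ℕ} (h : FnDependsOn F M) (k : ℕ) : FnDependsOn (pd k F) M := by
  intro x p q hpq
  rcases lt_or_ge k M with hk | hk
  · have heq : (fun t => F x (Function.update p k t)) = fun t => F x (Function.update q k t) := by
      funext t
      apply h
      intro i hi
      rw [Function.update_apply, Function.update_apply]
      by_cases hik : i = k
      · simp [hik]
      · simp [hik, hpq i hi]
    show deriv _ (p k) = deriv _ (q k)
    rw [heq, hpq k hk]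
  · rw [pd_zero h hk, pd_zero h hk]

lemma dependsOn_pdx {F : Fn} {M : ℕ} (h : FnDependsOn F M) : FnDependsOn (pdx F) M := by
  intro x p q hpq
  have heq : (fun t => F t p) = fun t => F t q := funext fun t => h t p q hpq
  show deriv _ x = deriv _ x
  rw [heq]

lemma rep_pd {F : Fn} {M k : ℕ} (hF : SmoothUpTo F M) (hk : k < M) :
    rep (pd k F) M = fun v => fderiv ℝ (rep F M) v ((0, Pi.single ⟨k, hk⟩ 1)) := by
  funext v
  show pd k F v.1 (fun i => if h : i < M then v.2 ⟨i, h⟩ else 0) = _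
  rw [pd_eq hF hk, emb_ext]

lemma rep_pdx {F : Fn} {M : ℕ} (hF : SmoothUpTo F M) :
    rep (pdx F) M = fun v => fderiv ℝ (rep F M) v (((1 : ℝ), 0)) := by
  funext v
  show pdx F v.1 (fun i => if h : i < M then v.2 ⟨i, h⟩ else 0) = _
  rw [pdx_eq hF, emb_ext]

lemma contDiff_fderiv_apply {M : ℕ} {g : ℝ × (Fin M → ℝ) → ℝ} (hg : ContDiff ℝ (⊤ : ℕ∞) g)
    (u : ℝ × (Fin M → ℝ)) :
    ContDiff ℝ (⊤ : ℕ∞) (fun v => fderiv ℝ g v u) :=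
  (hg.fderiv_right (by simp)).clm_apply contDiff_const

lemma smoothUpTo_pd {F : Fn} {M : ℕ} (hF : SmoothUpTo F M) (k : ℕ) :
    SmoothUpTo (pd k F) M := by
  rcases lt_or_ge k M with hk | hk
  · refine ⟨dependsOn_pd hF.1 k, ?_⟩
    show ContDiff ℝ (⊤ : ℕ∞) (rep (pd k F) M)
    rw [rep_pd hF hk]
    exact contDiff_fderiv_apply hF.2 _
  · refine ⟨dependsOn_pd hF.1 k, ?_⟩
    show ContDiff ℝ (⊤ : ℕ∞) (rep (pd k F) M)
    have : rep (pd k F) M = fun _ => (0:ℝ) := by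
      funext v
      show pd k F v.1 _ = 0
      rw [pd_zero hF.1 hk]
    rw [this]
    exact contDiff_const

lemma smoothUpTo_pdx {F : Fn} {M : ℕ} (hF : SmoothUpTo F M) : SmoothUpTo (pdx F) M := by
  refine ⟨dependsOn_pdx hF.1, ?_⟩
  show ContDiff ℝ (⊤ : ℕ∞) (rep (pdx F) M)
  rw [rep_pdx hF]
  exact contDiff_fderiv_apply hF.2 _

/-- Symmetry of directional second derivatives on the representation space. -/
lemma fderiv_swap {M : ℕ} {g : ℝ × (Fin M → ℝ) → ℝ} (hg : ContDiff ℝ (⊤ : ℕ∞) g)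
    (v₀ u w : ℝ × (Fin M → ℝ)) :
    fderiv ℝ (fun v => fderiv ℝ g v u) v₀ w = fderiv ℝ (fun v => fderiv ℝ g v w) v₀ u := by
  have hd : DifferentiableAt ℝ (fderiv ℝ g) v₀ :=
    ((hg.fderiv_right (m := (⊤ : ℕ∞)) (by simp)).differentiable (by simp)).differentiableAt
  have key : ∀ z : ℝ × (Fin M → ℝ), fderiv ℝ (fun v => fderiv ℝ g v z) v₀ =
      (ContinuousLinearMap.apply ℝ ℝ z).comp (fderiv ℝ (fderiv ℝ g) v₀) := by
    intro z
    have hcomp := ((ContinuousLinearMap.apply ℝ ℝ z).hasFDerivAt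
      (x := fderiv ℝ g v₀)).comp v₀ hd.hasFDerivAt
    exact hcomp.fderiv
  have hsymm : IsSymmSndFDerivAt ℝ g v₀ :=
    (hg.contDiffAt).isSymmSndFDerivAt (by simp; norm_cast)
  rw [key u, key w]
  exact hsymm w u

lemma pd_pd_comm {F : Fn} {M : ℕ} (hF : SmoothUpTo F M) (j k : ℕ) (x : ℝ) (p : ℕ → ℝ) :
    pd j (pd k F) x p = pd k (pd j F) x p := by
  rcases lt_or_ge k M with hk | hk
  · rcases lt_or_ge j M with hj | hj
    · rw [pd_eq (smoothUpTo_pd hF k) hj x p, pd_eq (smoothUpTo_pd hF j) hk x p,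
        rep_pd hF hk, rep_pd hF hj]
      exact fderiv_swap hF.2 _ _ _
    · rw [pd_zero (dependsOn_pd hF.1 k) hj]
      have : ∀ y q, pd j F y q = 0 := pd_zero hF.1 hj
      have heq : pd j F = fun _ _ => (0:ℝ) := by funext y q; exact this y q
      rw [heq, pd_zero_fn]
  · rw [pd_zero (dependsOn_pd hF.1 j) hk]
    have heq : pd k F = fun _ _ => (0:ℝ) := by funext y q; exact pd_zero hF.1 hk y q
    rw [heq, pd_zero_fn]

lemma pdx_pd_comm {F : Fn} {M : ℕ} (hF : SmoothUpTo F M) (k : ℕ) (x : ℝ) (p : ℕ → ℝ) :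
    pdx (pd k F) x p = pd k (pdx F) x p := by
  rcases lt_or_ge k M with hk | hk
  · rw [pdx_eq (smoothUpTo_pd hF k) x p, pd_eq (smoothUpTo_pdx hF) hk x p,
      rep_pd hF hk, rep_pdx hF]
    exact fderiv_swap hF.2 _ _ _
  · have heq : pd k F = fun _ _ => (0:ℝ) := by funext y q; exact pd_zero hF.1 hk y q
    rw [heq, pdx_zero_fn, pd_zero (dependsOn_pdx hF.1) hk]

end Machinery
/-! ### Layer 3a: closure properties of `SmoothUpTo`, and `pint`. -/

noncomputable section Closure

open Set Function

lemma smoothUpTo_congr {F G : Fn} {M : ℕ} (h : ∀ x p, F x p = G x p) (hF : SmoothUpTo F M) :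
    SmoothUpTo G M := by
  have : F = G := funext fun x => funext fun p => h x p
  rwa [← this]

lemma smoothUpTo_const (c : ℝ) (M : ℕ) : SmoothUpTo (fun _ _ => c) M := by
  refine ⟨fun _ _ _ _ => rfl, ?_⟩
  exact contDiff_const

lemma smoothUpTo_mono {F : Fn} {M M' : ℕ} (hF : SmoothUpTo F M) (h : M ≤ M') :
    SmoothUpTo F M' := by
  have hdep : FnDependsOn F M' := fun x p q hpq => hF.1 x p q fun i hi => hpq i (lt_of_lt_of_le hi h)
  refine ⟨hdep, ?_⟩
  show ContDiff ℝ (⊤ : ℕ∞) (rep F M')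
  have hrepeq : rep F M' = (rep F M) ∘
      (fun v : ℝ × (Fin M' → ℝ) => ((v.1, fun i : Fin M => v.2 ⟨i.1, lt_of_lt_of_le i.isLt h⟩) :
        ℝ × (Fin M → ℝ))) := by
    funext v
    show F v.1 _ = F v.1 _
    apply hF.1
    intro i hi
    have hi' : i < M' := lt_of_lt_of_le hi h
    simp [dif_pos hi, dif_pos hi']
  rw [hrepeq]
  apply hF.2.comp
  apply ContDiff.prodMk contDiff_fst
  apply contDiff_pi.2
  intro i
  exact (ContinuousLinearMap.proj (R := ℝ)
    (φ := fun _ : Fin M' => ℝ) ⟨i.1, lt_of_lt_of_le i.isLt h⟩).contDiff.comp contDiff_snd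

lemma smoothUpTo_down {F : Fn} {M M' : ℕ} (hF : SmoothUpTo F M) (hdep : FnDependsOn F M') :
    SmoothUpTo F M' := by
  rcases le_or_gt M M' with h | h
  · exact smoothUpTo_mono hF h
  · refine ⟨hdep, ?_⟩
    show ContDiff ℝ (⊤ : ℕ∞) (rep F M')
    have hrepeq : rep F M' = (rep F M) ∘
        (fun v : ℝ × (Fin M' → ℝ) => ((v.1, fun i : Fin M =>
          if h2 : i.1 < M' then v.2 ⟨i.1, h2⟩ else 0) : ℝ × (Fin M → ℝ))) := by
      funext v
      show F v.1 _ = F v.1 _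
      apply hdep
      intro i hi
      have hiM : i < M := lt_trans hi h
      simp [dif_pos hi, dif_pos hiM]
    rw [hrepeq]
    apply hF.2.comp
    apply ContDiff.prodMk contDiff_fst
    apply contDiff_pi.2
    intro i
    by_cases h2 : i.1 < M'
    · simp only [dif_pos h2]
      exact (ContinuousLinearMap.proj (R := ℝ)
        (φ := fun _ : Fin M' => ℝ) ⟨i.1, h2⟩).contDiff.comp contDiff_snd
    · simp only [dif_neg h2]
      exact contDiff_const

lemma smoothUpTo_add {F G : Fn} {M : ℕ} (hF : SmoothUpTo F M) (hG : SmoothUpTo G M) :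
    SmoothUpTo (fun x p => F x p + G x p) M := by
  refine ⟨fun x p q hpq => by
    show F x p + G x p = F x q + G x q
    rw [hF.1 x p q hpq, hG.1 x p q hpq], ?_⟩
  exact hF.2.add hG.2

lemma smoothUpTo_sub {F G : Fn} {M : ℕ} (hF : SmoothUpTo F M) (hG : SmoothUpTo G M) :
    SmoothUpTo (fun x p => F x p - G x p) M := by
  refine ⟨fun x p q hpq => by
    show F x p - G x p = F x q - G x q
    rw [hF.1 x p q hpq, hG.1 x p q hpq], ?_⟩
  exact hF.2.sub hG.2

lemma smoothUpTo_const_mul {F : Fn} {M : ℕ} (c : ℝ) (hF : SmoothUpTo F M) :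
    SmoothUpTo (fun x p => c * F x p) M := by
  refine ⟨fun x p q hpq => by
    show c * F x p = c * F x q
    rw [hF.1 x p q hpq], ?_⟩
  exact contDiff_const.mul hF.2

lemma smoothUpTo_mul {F G : Fn} {M : ℕ} (hF : SmoothUpTo F M) (hG : SmoothUpTo G M) :
    SmoothUpTo (fun x p => F x p * G x p) M := by
  refine ⟨fun x p q hpq => by
    show F x p * G x p = F x q * G x q
    rw [hF.1 x p q hpq, hG.1 x p q hpq], ?_⟩
  exact hF.2.mul hG.2

lemma dependsOn_coord (j : ℕ) : FnDependsOn (fun _ p => p j) (j + 1) :=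
  fun _ p q hpq => hpq j (Nat.lt_succ_self j)

lemma smoothUpTo_coord (j : ℕ) : SmoothUpTo (fun _ p => p j) (j + 1) := by
  refine ⟨dependsOn_coord j, ?_⟩
  show ContDiff ℝ (⊤ : ℕ∞) (rep (fun _ p => p j) (j + 1))
  have : rep (fun _ p => p j) (j + 1) = fun v : ℝ × (Fin (j+1) → ℝ) =>
      v.2 ⟨j, Nat.lt_succ_self j⟩ := by
    funext v
    show (if h : j < j + 1 then v.2 ⟨j, h⟩ else 0) = _
    simp
  rw [this]
  exact (ContinuousLinearMap.proj (R := ℝ) (φ := fun _ : Fin (j+1) => ℝ)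
    ⟨j, Nat.lt_succ_self j⟩).contDiff.comp contDiff_snd

lemma smoothUpTo_sum {ι : Type} (s : Finset ι) (F : ι → Fn) (M : ℕ)
    (h : ∀ i ∈ s, SmoothUpTo (F i) M) :
    SmoothUpTo (fun x p => ∑ i ∈ s, F i x p) M := by
  classical
  induction s using Finset.cons_induction_on with
  | empty =>
    simp only [Finset.sum_empty]
    exact smoothUpTo_const 0 M
  | cons _ _ ha ih =>
    rename_i a s'
    simp only [Finset.sum_cons]
    exact smoothUpTo_add (h a (Finset.mem_cons_self _ _))
      (ih fun i hi => h i (Finset.mem_cons_of_mem hi))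

/-! #### pint -/

lemma dependsOn_pint {F : Fn} {M k : ℕ} (h : FnDependsOn F M) (hk : k < M) :
    FnDependsOn (pint k F) M := by
  intro x p q hpq
  show (∫ t in (0:ℝ)..(p k), F x (Function.update p k t)) =
    ∫ t in (0:ℝ)..(q k), F x (Function.update q k t)
  rw [hpq k hk]
  congr 1
  funext t
  apply h
  intro i hi
  rw [Function.update_apply, Function.update_apply]
  by_cases hik : i = k
  · simp [hik]
  · simp [hik, hpq i hi]

universe uu

lemma contDiff_param_unit_aux {E : Type uu} [NormedAddCommGroup E] [NormedSpace ℝ E]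
    [FiniteDimensional ℝ E] (n : ℕ) :
    ∀ {G : Type uu} [NormedAddCommGroup G] [NormedSpace ℝ G] [CompleteSpace G]
      (φ : E × ℝ → G), ContDiff ℝ ((⊤ : ℕ∞) : WithTop ℕ∞) φ →
      ContDiff ℝ n (fun z : E => ∫ u in (0:ℝ)..1, φ (z, u)) := by
  induction n with
  | zero =>
    intro G _ _ _ φ hφ
    rw [Nat.cast_zero, contDiff_zero]
    exact intervalIntegral.continuous_parametric_intervalIntegral_of_continuous'
      (f := fun z u => φ (z, u)) hφ.continuous 0 1
  | succ n ih =>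
    intro G _ _ _ φ hφ
    set ψ : E × ℝ → (E →L[ℝ] G) :=
      fun w => (fderiv ℝ φ w).comp ((ContinuousLinearMap.id ℝ E).prod 0) with hψdef
    have hψ : ContDiff ℝ ((⊤ : ℕ∞) : WithTop ℕ∞) ψ :=
      (hφ.fderiv_right (m := ((⊤ : ℕ∞) : WithTop ℕ∞)) (by simp)).clm_comp contDiff_const
    have hdiff : ∀ (z : E) (u : ℝ), HasFDerivAt (fun z' => φ (z', u)) (ψ (z, u)) z := by
      intro z u
      exact ((hφ.differentiable (by simp)) (z, u)).hasFDerivAt.comp z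
        ((hasFDerivAt_id z).prodMk (hasFDerivAt_const u z))
    have hQ : ∀ z : E, HasFDerivAt (fun z : E => ∫ u in (0:ℝ)..1, φ (z, u))
        (∫ u in (0:ℝ)..1, ψ (z, u)) z := by
      intro z
      obtain ⟨C, hC⟩ := ((isCompact_closedBall z 1).prod isCompact_Icc).exists_bound_of_continuousOn
        (hψ.continuous.continuousOn (s := Metric.closedBall z 1 ×ˢ Set.Icc (0:ℝ) 1))
      refine intervalIntegral.hasFDerivAt_integral_of_dominated_of_fderiv_le
        (bound := fun _ => C) (Metric.ball_mem_nhds z one_pos)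
        (Filter.Eventually.of_forall fun x =>
          (hφ.continuous.comp (continuous_const.prodMk continuous_id)).aestronglyMeasurable)
        ((hφ.continuous.comp (continuous_const.prodMk continuous_id)).intervalIntegrable 0 1)
        ((hψ.continuous.comp (continuous_const.prodMk continuous_id)).aestronglyMeasurable)
        ?_ (continuous_const.intervalIntegrable 0 1)
        (Filter.Eventually.of_forall fun t _ x _ => hdiff x t)
      refine Filter.Eventually.of_forall fun t ht x hx => hC (x, t) ⟨?_, ?_⟩
      · exact Metric.ball_subset_closedBall hx
      · rw [Set.uIoc_of_le zero_le_one] at ht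
        exact Set.Ioc_subset_Icc_self ht
    rw [Nat.cast_succ, contDiff_succ_iff_fderiv]
    refine ⟨fun z => (hQ z).differentiableAt, by simp, ?_⟩
    have hfd : fderiv ℝ (fun z : E => ∫ u in (0:ℝ)..1, φ (z, u)) =
        fun z => ∫ u in (0:ℝ)..1, ψ (z, u) := by
      funext z
      exact (hQ z).fderiv
    rw [hfd]
    exact ih ψ hψ

lemma contDiff_prim_smooth {H : Type} [NormedAddCommGroup H] [NormedSpace ℝ H]
    [FiniteDimensional ℝ H] {g : H × ℝ → ℝ} (hg : ContDiff ℝ ((⊤ : ℕ∞) : WithTop ℕ∞) g) :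
    ContDiff ℝ ((⊤ : ℕ∞) : WithTop ℕ∞) (fun z : H × ℝ => ∫ t in (0:ℝ)..z.2, g (z.1, t)) := by
  have heq : (fun z : H × ℝ => ∫ t in (0:ℝ)..z.2, g (z.1, t)) =
      fun z => ∫ u in (0:ℝ)..1, z.2 * g (z.1, z.2 * u) := by
    funext z
    rw [intervalIntegral.integral_const_mul]
    have := intervalIntegral.smul_integral_comp_mul_left (a := 0) (b := 1)
      (fun t => g (z.1, t)) z.2
    simp only [smul_eq_mul, mul_zero, mul_one] at this
    exact this.symm
  rw [heq, contDiff_infty]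
  intro n
  exact contDiff_param_unit_aux n (fun w : (H × ℝ) × ℝ => w.1.2 * g (w.1.1, w.1.2 * w.2))
    ((contDiff_snd.comp contDiff_fst).mul (hg.comp ((contDiff_fst.comp contDiff_fst).prodMk
      ((contDiff_snd.comp contDiff_fst).mul contDiff_snd))))

lemma smoothUpTo_pint {F : Fn} {M k : ℕ} (hF : SmoothUpTo F M) (hk : k < M) :
    SmoothUpTo (pint k F) M := by
  refine ⟨dependsOn_pint hF.1 hk, ?_⟩
  show ContDiff ℝ (⊤ : ℕ∞) (rep (pint k F) M)
  set g : (ℝ × (Fin M → ℝ)) × ℝ → ℝ :=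
    fun y => rep F M (y.1.1, Function.update y.1.2 ⟨k, hk⟩ y.2) with hg
  have hgsmooth : ContDiff ℝ (⊤ : ℕ∞) g := by
    apply hF.2.comp
    apply ContDiff.prodMk (contDiff_fst.comp contDiff_fst)
    apply contDiff_pi.2
    intro i
    by_cases h2 : i = (⟨k, hk⟩ : Fin M)
    · subst h2
      simp only [Function.update_self]
      exact contDiff_snd
    · simp only [Function.update_of_ne h2]
      exact (ContinuousLinearMap.proj (R := ℝ) (φ := fun _ : Fin M => ℝ) i).contDiff.comp
        (contDiff_snd.comp contDiff_fst)
  have hrepeq : rep (pint k F) M =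
      (fun z : (ℝ × (Fin M → ℝ)) × ℝ => ∫ t in (0:ℝ)..z.2, g (z.1, t)) ∘
        (fun q : ℝ × (Fin M → ℝ) => (q, q.2 ⟨k, hk⟩)) := by
    funext q
    show pint k F q.1 (fun i => if h : i < M then q.2 ⟨i, h⟩ else 0) = _
    show (∫ t in (0:ℝ)..((fun i => if h : i < M then q.2 ⟨i, h⟩ else 0) k),
      F q.1 (Function.update (fun i => if h : i < M then q.2 ⟨i, h⟩ else 0) k t)) = _
    have hlim : (fun i => if h : i < M then q.2 ⟨i, h⟩ else 0) k = q.2 ⟨k, hk⟩ := dif_pos hk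
    rw [hlim]
    show _ = ∫ t in (0:ℝ)..(q.2 ⟨k, hk⟩), rep F M (q.1, Function.update q.2 ⟨k, hk⟩ t)
    congr 1
    funext t
    show F q.1 _ = F q.1 _
    apply hF.1
    intro i hi
    rw [Function.update_apply]
    by_cases hik : i = k
    · subst hik
      simp [Function.update_apply, dif_pos hi]
    · have hne : (⟨i, hi⟩ : Fin M) ≠ ⟨k, hk⟩ := by
        simpa [Fin.ext_iff] using hik
      simp only [if_neg hik, dif_pos hi, Function.update_apply]
      rw [if_neg hne]
  rw [hrepeq]
  apply ContDiff.comp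
  · exact contDiff_prim_smooth hgsmooth
  · exact contDiff_id.prodMk ((ContinuousLinearMap.proj (R := ℝ)
      (φ := fun _ : Fin M => ℝ) ⟨k, hk⟩).contDiff.comp contDiff_snd)

lemma pd_pint_self {F : Fn} {M k : ℕ} (hF : SmoothUpTo F M) (hk : k < M) (x : ℝ) (p : ℕ → ℝ) :
    pd k (pint k F) x p = F x p := by
  have hcont : Continuous (fun s => F x (Function.update p k s)) := by
    have heq : (fun s => F x (Function.update p k s)) =
        (rep F M) ∘ (fun s => ((x, Function.update (emb M p) ⟨k, hk⟩ s) : ℝ × (Fin M → ℝ))) := by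
      funext s
      show F x (Function.update p k s) = rep F M (x, Function.update (emb M p) ⟨k, hk⟩ s)
      rw [rep_emb hF.1 x (Function.update p k s), emb_update hk]
    rw [heq]
    have hcurve : Continuous (fun s : ℝ => Function.update (emb M p) (⟨k, hk⟩ : Fin M) s) :=
      Continuous.update (continuous_const : Continuous fun _ : ℝ => emb M p) _ continuous_id
    exact (hF.2.continuous).comp (continuous_const.prodMk hcurve)
  have hslice : (fun t => pint k F x (Function.update p k t)) =
      fun t => ∫ s in (0:ℝ)..t, F x (Function.update p k s) := by
    funext t
    show (∫ s in (0:ℝ)..(Function.update p k t k),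
      F x (Function.update (Function.update p k t) k s)) = _
    rw [Function.update_self]
    congr 1
    funext s
    rw [Function.update_idem]
  show deriv (fun t => pint k F x (Function.update p k t)) (p k) = F x p
  rw [hslice, Continuous.deriv_integral _ hcont 0 (p k), Function.update_eq_self]

end Closure
/-! ### Layer 3b: algebra of `D` and `E`. -/

noncomputable section Operators

open Set Function

lemma pd_add_pt {F G : Fn} {MF MG : ℕ} (hF : SmoothUpTo F MF) (hG : SmoothUpTo G MG)
    (k : ℕ) (x : ℝ) (p : ℕ → ℝ) :
    pd k (fun x p => F x p + G x p) x p = pd k F x p + pd k G x p := by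
  have h1 := pd_hasDerivAt hF k x p (p k)
  have h2 := pd_hasDerivAt hG k x p (p k)
  rw [Function.update_eq_self] at h1 h2
  exact (h1.add h2).deriv

lemma pdx_add_pt {F G : Fn} {MF MG : ℕ} (hF : SmoothUpTo F MF) (hG : SmoothUpTo G MG)
    (x : ℝ) (p : ℕ → ℝ) :
    pdx (fun x p => F x p + G x p) x p = pdx F x p + pdx G x p :=
  ((pdx_hasDerivAt' hF p x).add (pdx_hasDerivAt' hG p x)).deriv

lemma D_add_pt {F G : Fn} {MF MG : ℕ} (hF : SmoothUpTo F MF) (hG : SmoothUpTo G MG)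
    (m : ℕ) (x : ℝ) (p : ℕ → ℝ) :
    D m (fun x p => F x p + G x p) x p = D m F x p + D m G x p := by
  show pdx (fun x p => F x p + G x p) x p + _ = _
  rw [pdx_add_pt hF hG x p]
  have hterm : ∀ k ∈ Finset.range m,
      p (k+1) * pd k (fun x p => F x p + G x p) x p =
        p (k+1) * pd k F x p + p (k+1) * pd k G x p := by
    intro k _
    rw [pd_add_pt hF hG k x p]
    ring
  rw [Finset.sum_congr rfl hterm, Finset.sum_add_distrib]
  show _ = (pdx F x p + _) + (pdx G x p + _)
  ring

lemma smoothUpTo_D {F : Fn} {M : ℕ} (hF : SmoothUpTo F M) (m : ℕ) :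
    SmoothUpTo (D m F) (max M (m + 1)) := by
  have h1 : SmoothUpTo (fun x p => pdx F x p +
      ∑ k ∈ Finset.range m, p (k+1) * pd k F x p) (max M (m+1)) := by
    apply smoothUpTo_add
    · exact smoothUpTo_mono (smoothUpTo_pdx hF) (le_max_left _ _)
    · apply smoothUpTo_sum
      intro k hk
      apply smoothUpTo_mul
      · refine smoothUpTo_mono (smoothUpTo_coord (k+1)) ?_
        have : k < m := Finset.mem_range.1 hk
        exact le_trans (by omega) (le_max_right M (m+1))
      · exact smoothUpTo_mono (smoothUpTo_pd hF k) (le_max_left _ _)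
  exact smoothUpTo_congr (fun x p => rfl) h1

lemma smoothUpTo_D_le {F : Fn} {M m : ℕ} (hF : SmoothUpTo F M) (hMm : M ≤ m) :
    SmoothUpTo (D m F) (M + 1) := by
  have h := smoothUpTo_D hF m
  apply smoothUpTo_down h
  intro x p q hpq
  show pdx F x p + _ = pdx F x q + _
  rw [dependsOn_pdx hF.1 x p q (fun i hi => hpq i (by omega))]
  congr 1
  apply Finset.sum_congr rfl
  intro k hk
  rcases lt_or_ge k M with h1 | h1
  · rw [dependsOn_pd hF.1 k x p q (fun i hi => hpq i (by omega)), hpq (k+1) (by omega)]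
  · rw [pd_zero hF.1 h1 x p, pd_zero hF.1 h1 x q, mul_zero, mul_zero]

lemma smoothUpTo_D_iter {F : Fn} {M m : ℕ} (hF : SmoothUpTo F M) :
    ∀ j, M + j ≤ m + 1 → SmoothUpTo ((D m)^[j] F) (M + j) := by
  intro j
  induction j generalizing F M with
  | zero => intro _; simpa using hF
  | succ j ih =>
    intro hj
    rw [Function.iterate_succ_apply]
    have h1 : SmoothUpTo (D m F) (M + 1) := smoothUpTo_D_le hF (by omega)
    have := ih h1 (by omega)
    have heq : M + 1 + j = M + (j + 1) := by omega
    rwa [heq] at this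

lemma D_zero_fn (m : ℕ) : D m (fun _ _ => (0:ℝ)) = fun _ _ => (0:ℝ) := by
  funext x p
  show pdx (fun _ _ => (0:ℝ)) x p + _ = 0
  rw [pdx_zero_fn]
  have : ∀ k ∈ Finset.range m, p (k+1) * pd k (fun _ _ => (0:ℝ)) x p = 0 := by
    intro k _
    rw [pd_zero_fn]
    ring
  rw [Finset.sum_congr rfl this]
  simp

lemma D_iter_zero_fn (m : ℕ) : ∀ j, (D m)^[j] (fun _ _ => (0:ℝ)) = fun _ _ => (0:ℝ) := by
  intro j
  induction j with
  | zero => rfl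
  | succ j ih =>
    rw [Function.iterate_succ_apply, D_zero_fn]
    exact ih

lemma D_split {F : Fn} {m m' : ℕ} (h : m' ≤ m) (x : ℝ) (p : ℕ → ℝ) :
    D m F x p = D m' F x p + ∑ k ∈ Finset.Ico m' m, p (k+1) * pd k F x p := by
  show pdx F x p + ∑ k ∈ Finset.range m, _ = (pdx F x p + ∑ k ∈ Finset.range m', _) + _
  rw [← Finset.sum_range_add_sum_Ico (fun k => p (k+1) * pd k F x p) h]
  ring

lemma D_trunc {F : Fn} {M m m' : ℕ} (h : FnDependsOn F M) (h1 : M ≤ m') (h2 : m' ≤ m)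
    (x : ℝ) (p : ℕ → ℝ) :
    D m F x p = D m' F x p := by
  rw [D_split h2]
  have hz : ∀ k ∈ Finset.Ico m' m, p (k+1) * pd k F x p = 0 := by
    intro k hk
    rw [pd_zero h (le_trans h1 (Finset.mem_Ico.1 hk).1), mul_zero]
  rw [Finset.sum_congr rfl hz]
  simp

lemma dependsOn_D' {F : Fn} {r m' : ℕ} (h : FnDependsOn F r) (hrm : r ≤ m') :
    FnDependsOn (D m' F) (r + 1) := by
  intro x p q hpq
  show pdx F x p + _ = pdx F x q + _
  rw [dependsOn_pdx h x p q (fun i hi => hpq i (by omega))]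
  congr 1
  apply Finset.sum_congr rfl
  intro k hk
  rcases lt_or_ge k r with h1 | h1
  · rw [dependsOn_pd h k x p q (fun i hi => hpq i (by omega)), hpq (k+1) (by omega)]
  · rw [pd_zero h h1 x p, pd_zero h h1 x q, mul_zero, mul_zero]

lemma D_iter_trunc {F : Fn} {r : ℕ} (h : FnDependsOn F r) :
    ∀ (j m m' : ℕ), r + j ≤ m' + 1 → m' ≤ m → ∀ x p,
      (D m)^[j] F x p = (D m')^[j] F x p := by
  intro j
  induction j generalizing F r with
  | zero => intro m m' _ _ x p; rfl
  | succ j ih =>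
    intro m m' hj hm x p
    rw [Function.iterate_succ_apply, Function.iterate_succ_apply]
    have hDeq : D m F = D m' F := by
      funext y q
      exact D_trunc h (by omega) hm y q
    rw [hDeq]
    exact ih (dependsOn_D' h (by omega)) m m' (by omega) hm x p

/-! #### scalar multiples (unconditional) -/

lemma pd_const_mul (c : ℝ) (F : Fn) (k : ℕ) :
    pd k (fun x p => c * F x p) = fun x p => c * pd k F x p := by
  funext x p
  show deriv (fun t => c * F x (Function.update p k t)) (p k) = _
  rw [deriv_const_mul_field c]
  rfl

lemma pdx_const_mul (c : ℝ) (F : Fn) :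
    pdx (fun x p => c * F x p) = fun x p => c * pdx F x p := by
  funext x p
  show deriv (fun t => c * F t p) x = _
  rw [deriv_const_mul_field c]
  rfl

lemma D_const_mul (c : ℝ) (F : Fn) (m : ℕ) :
    D m (fun x p => c * F x p) = fun x p => c * D m F x p := by
  funext x p
  show pdx (fun x p => c * F x p) x p + _ = c * (pdx F x p + _)
  rw [pdx_const_mul c F]
  simp only [pd_const_mul c F]
  rw [mul_add, Finset.mul_sum]
  congr 1
  apply Finset.sum_congr rfl
  intro k _
  ring

lemma D_iter_const_mul (c : ℝ) (F : Fn) (m : ℕ) :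
    ∀ j, (D m)^[j] (fun x p => c * F x p) = fun x p => c * (D m)^[j] F x p := by
  intro j
  induction j generalizing F with
  | zero => rfl
  | succ j ih =>
    rw [Function.iterate_succ_apply, Function.iterate_succ_apply, D_const_mul c F m]
    exact ih (D m F)

lemma E_const_mul (c : ℝ) (F : Fn) (m n : ℕ) (x : ℝ) (p : ℕ → ℝ) :
    E m n (fun x p => c * F x p) x p = c * E m n F x p := by
  show (∑ k ∈ Finset.range (n+1), (-1:ℝ)^k * ((D m)^[k] (pd k (fun x p => c * F x p))) x p) = _
  rw [show c * E m n F x p = ∑ k ∈ Finset.range (n+1),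
    c * ((-1:ℝ)^k * ((D m)^[k] (pd k F)) x p) from by rw [← Finset.mul_sum]; rfl]
  apply Finset.sum_congr rfl
  intro k _
  rw [pd_const_mul c F k, D_iter_const_mul c (pd k F) m k]
  show (-1:ℝ)^k * (c * ((D m)^[k] (pd k F)) x p) = _
  ring

/-! #### the commutator -/

lemma pd_D_comm {F : Fn} {M : ℕ} (hF : SmoothUpTo F M) {m j : ℕ} (hjm : j ≤ m)
    (x : ℝ) (p : ℕ → ℝ) :
    pd j (D m F) x p = D m (pd j F) x p + (if 1 ≤ j then pd (j-1) F x p else 0) := by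
  have hterm : ∀ k : ℕ, HasDerivAt
      (fun t => Function.update p j t (k+1) * pd k F x (Function.update p j t))
      ((if k+1 = j then (1:ℝ) else 0) * pd k F x p + p (k+1) * pd j (pd k F) x p) (p j) := by
    intro k
    have h1 : HasDerivAt (fun t => Function.update p j t (k+1))
        (if k+1 = j then (1:ℝ) else 0) (p j) := by
      by_cases h : (k+1 : ℕ) = j
      · have heq : (fun t : ℝ => Function.update p j t (k+1)) = fun t => t := by
          funext t
          rw [Function.update_apply, if_pos h]
        rw [heq, if_pos h]
        exact hasDerivAt_id _
      · have heq : (fun t : ℝ => Function.update p j t (k+1)) = fun _ => p (k+1) := by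
          funext t
          rw [Function.update_apply, if_neg h]
        rw [heq, if_neg h]
        exact hasDerivAt_const _ _
    have h2 := pd_hasDerivAt (smoothUpTo_pd hF k) j x p (p j)
    rw [Function.update_eq_self] at h2
    have h3 := h1.mul h2
    simp only [Function.update_eq_self] at h3
    exact h3
  have hx := pd_hasDerivAt (smoothUpTo_pdx hF) j x p (p j)
  rw [Function.update_eq_self] at hx
  have hsum : HasDerivAt (fun t => ∑ k ∈ Finset.range m,
      Function.update p j t (k+1) * pd k F x (Function.update p j t))
      (∑ k ∈ Finset.range m, ((if k+1 = j then (1:ℝ) else 0) * pd k F x p +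
        p (k+1) * pd j (pd k F) x p)) (p j) :=
    HasDerivAt.fun_sum (fun k _ => hterm k)
  have hall := hx.add hsum
  have hLHS : pd j (D m F) x p = pd j (pdx F) x p + ∑ k ∈ Finset.range m,
      ((if k+1 = j then (1:ℝ) else 0) * pd k F x p + p (k+1) * pd j (pd k F) x p) := by
    show deriv (fun t => D m F x (Function.update p j t)) (p j) = _
    exact hall.deriv
  rw [hLHS]
  show _ = (pdx (pd j F) x p + ∑ k ∈ Finset.range m, p (k+1) * pd k (pd j F) x p) + _
  rw [Finset.sum_add_distrib]
  have e1 : pd j (pdx F) x p = pdx (pd j F) x p := (pdx_pd_comm hF j x p).symm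
  have e2 : ∑ k ∈ Finset.range m, p (k+1) * pd j (pd k F) x p =
      ∑ k ∈ Finset.range m, p (k+1) * pd k (pd j F) x p := by
    apply Finset.sum_congr rfl
    intro k _
    rw [pd_pd_comm hF j k x p]
  have e3 : ∑ k ∈ Finset.range m, (if k+1 = j then (1:ℝ) else 0) * pd k F x p =
      if 1 ≤ j then pd (j-1) F x p else 0 := by
    rcases Nat.eq_zero_or_pos j with hj | hj
    · subst hj
      have : ∀ k ∈ Finset.range m, (if k+1 = 0 then (1:ℝ) else 0) * pd k F x p = 0 := by
        intro k _
        rw [if_neg (Nat.succ_ne_zero k), zero_mul]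
      rw [Finset.sum_congr rfl this]
      simp
    · have hmem : j - 1 ∈ Finset.range m := Finset.mem_range.2 (by omega)
      rw [Finset.sum_eq_single (j-1)]
      · rw [if_pos (by omega : j - 1 + 1 = j), one_mul, if_pos (by omega : 1 ≤ j)]
      · intro b _ hb
        rw [if_neg (by omega), zero_mul]
      · intro hb
        exact absurd hmem hb
    
  rw [e1, e2, e3]
  ring

/-! #### linearity of iterates and `E` -/

lemma D_iter_add (m : ℕ) :
    ∀ (j : ℕ) (F G : Fn) (MF MG : ℕ), SmoothUpTo F MF → SmoothUpTo G MG →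
      ∀ x p, (D m)^[j] (fun x p => F x p + G x p) x p = (D m)^[j] F x p + (D m)^[j] G x p := by
  intro j
  induction j with
  | zero => intro F G MF MG _ _ x p; rfl
  | succ j ih =>
    intro F G MF MG hF hG x p
    rw [Function.iterate_succ_apply, Function.iterate_succ_apply, Function.iterate_succ_apply]
    have hDeq : D m (fun x p => F x p + G x p) = fun x p => D m F x p + D m G x p := by
      funext y q
      exact D_add_pt hF hG m y q
    rw [hDeq]
    exact ih (D m F) (D m G) _ _ (smoothUpTo_D hF m) (smoothUpTo_D hG m) x p

lemma E_add {F G : Fn} {MF MG : ℕ} (hF : SmoothUpTo F MF) (hG : SmoothUpTo G MG)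
    (m n : ℕ) (x : ℝ) (p : ℕ → ℝ) :
    E m n (fun x p => F x p + G x p) x p = E m n F x p + E m n G x p := by
  show (∑ k ∈ Finset.range (n+1),
      (-1:ℝ)^k * ((D m)^[k] (pd k (fun x p => F x p + G x p))) x p) = _
  have hterm : ∀ k ∈ Finset.range (n+1),
      (-1:ℝ)^k * ((D m)^[k] (pd k (fun x p => F x p + G x p))) x p
        = (-1:ℝ)^k * ((D m)^[k] (pd k F)) x p + (-1:ℝ)^k * ((D m)^[k] (pd k G)) x p := by
    intro k _
    have hpd : pd k (fun x p => F x p + G x p) = fun x p => pd k F x p + pd k G x p := by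
      funext y q
      exact pd_add_pt hF hG k y q
    rw [hpd]
    rw [D_iter_add m k (pd k F) (pd k G) MF MG (smoothUpTo_pd hF k) (smoothUpTo_pd hG k) x p]
    ring
  rw [Finset.sum_congr rfl hterm, Finset.sum_add_distrib]
  rfl

lemma E_succ (m n : ℕ) (F : Fn) (x : ℝ) (p : ℕ → ℝ) :
    E m (n+1) F x p = E m n F x p + (-1:ℝ)^(n+1) * ((D m)^[n+1] (pd (n+1) F)) x p := by
  show (∑ k ∈ Finset.range (n+1+1), _) = _
  rw [Finset.sum_range_succ]
  rfl

/-! #### telescoping: `E` annihilates total derivatives -/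

lemma E_D_zero {G : Fn} {M m n : ℕ} (hG : SmoothUpTo G M) (hMn : M ≤ n) (hnm : n ≤ m)
    (x : ℝ) (p : ℕ → ℝ) :
    E m n (D m G) x p = 0 := by
  -- rewrite each term using the commutator
  have hcomm : ∀ k : ℕ, k ≤ m → pd k (D m G) =
      fun x p => D m (pd k G) x p + (if 1 ≤ k then pd (k-1) G x p else 0) := by
    intro k hk
    funext y q
    exact pd_D_comm hG hk y q
  have hterm : ∀ k, k ≤ m → ∀ x p, ((D m)^[k] (pd k (D m G))) x p =
      ((D m)^[k+1] (pd k G)) x p + ((D m)^[k] (fun x p => if 1 ≤ k then pd (k-1) G x p else 0)) x p := by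
    intro k hk x p
    rw [hcomm k hk]
    have hs1 : SmoothUpTo (D m (pd k G)) (max M (m+1)) := smoothUpTo_D (smoothUpTo_pd hG k) m
    have hs2 : SmoothUpTo (fun x p => if 1 ≤ k then pd (k-1) G x p else 0) M := by
      by_cases h : 1 ≤ k
      · simp only [if_pos h]
        exact smoothUpTo_pd hG (k-1)
      · simp only [if_neg h]
        exact smoothUpTo_const 0 M
    have := D_iter_add m k (D m (pd k G)) (fun x p => if 1 ≤ k then pd (k-1) G x p else 0)
      _ _ hs1 hs2 x p
    rw [this]
    rw [← Function.iterate_succ_apply]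
  show (∑ k ∈ Finset.range (n+1), (-1:ℝ)^k * ((D m)^[k] (pd k (D m G))) x p) = 0
  have hsum : ∀ k ∈ Finset.range (n+1), (-1:ℝ)^k * ((D m)^[k] (pd k (D m G))) x p =
      (-1:ℝ)^k * ((D m)^[k+1] (pd k G)) x p +
      (-1:ℝ)^k * ((D m)^[k] (fun x p => if 1 ≤ k then pd (k-1) G x p else 0)) x p := by
    intro k hk
    have hkm : k ≤ m := by
      have := Finset.mem_range.1 hk
      omega
    rw [hterm k hkm x p]
    ring
  rw [Finset.sum_congr rfl hsum, Finset.sum_add_distrib]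
  have h2nd : (∑ k ∈ Finset.range (n+1),
      (-1:ℝ)^k * ((D m)^[k] (fun x p => if 1 ≤ k then pd (k-1) G x p else 0)) x p)
      = ∑ k ∈ Finset.range n,
        (-(1:ℝ)) * ((-1:ℝ)^k * ((D m)^[k+1] (pd k G)) x p) := by
    rw [Finset.sum_range_succ']
    have hzero : (-1:ℝ)^0 * ((D m)^[0]
        (fun x p => if 1 ≤ 0 then pd (0-1) G x p else 0)) x p = 0 := by
      norm_num
    rw [hzero, add_zero]
    apply Finset.sum_congr rfl
    intro k _
    have hfn : (fun x p => if 1 ≤ k + 1 then pd (k + 1 - 1) G x p else 0) = pd k G := by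
      funext y q
      rw [if_pos (by omega : 1 ≤ k + 1), Nat.add_sub_cancel]
    rw [hfn]
    ring
  rw [h2nd]
  rw [Finset.sum_range_succ (fun k => (-1:ℝ)^k * ((D m)^[k+1] (pd k G)) x p) n]
  have hlast : ((D m)^[n+1] (pd n G)) x p = 0 := by
    have hpd : pd n G = fun _ _ => (0:ℝ) := by
      funext y q
      exact pd_zero hG.1 hMn y q
    rw [hpd, D_iter_zero_fn]
  rw [hlast, mul_zero, add_zero]
  rw [← Finset.sum_add_distrib]
  have hcancel : ∀ k ∈ Finset.range n, ((-1:ℝ)^k * ((D m)^[k+1] (pd k G)) x p +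
      (-(1:ℝ)) * ((-1:ℝ)^k * ((D m)^[k+1] (pd k G)) x p)) = 0 := by
    intro k _
    ring
  rw [Finset.sum_congr rfl hcancel, Finset.sum_const_zero]

end Operators
/-! ### Layer 3c: remaining operator lemmas. -/

noncomputable section Operators2

open Set Function

lemma pd_sub_pt {F G : Fn} {MF MG : ℕ} (hF : SmoothUpTo F MF) (hG : SmoothUpTo G MG)
    (k : ℕ) (x : ℝ) (p : ℕ → ℝ) :
    pd k (fun x p => F x p - G x p) x p = pd k F x p - pd k G x p := by
  have h1 := pd_hasDerivAt hF k x p (p k)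
  have h2 := pd_hasDerivAt hG k x p (p k)
  rw [Function.update_eq_self] at h1 h2
  exact (h1.sub h2).deriv

/-- Top-order coefficient survives iterated total derivatives. -/
lemma pd_top_iter {F : Fn} (r m : ℕ) (hF : SmoothUpTo F (r+1)) :
    ∀ j, r + j ≤ m → ∀ x p, pd (r+j) ((D m)^[j] F) x p = pd r F x p := by
  intro j
  induction j generalizing F with
  | zero => intro _ x p; rfl
  | succ j ih =>
    intro hj x p
    rw [Function.iterate_succ_apply']
    have hFj : SmoothUpTo ((D m)^[j] F) (r+1+j) := smoothUpTo_D_iter hF j (by omega)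
    have hcomm := pd_D_comm hFj (m := m) (j := r+j+1) (by omega) x p
    have hzero : pd (r+j+1) ((D m)^[j] F) = fun _ _ => (0:ℝ) := by
      funext y q
      exact pd_zero hFj.1 (by omega) y q
    show pd (r+j+1) (D m ((D m)^[j] F)) x p = pd r F x p
    rw [hcomm, hzero, D_zero_fn, if_pos (by omega : 1 ≤ r+j+1)]
    show 0 + pd (r+j+1-1) ((D m)^[j] F) x p = pd r F x p
    rw [zero_add, show r+j+1-1 = r+j from rfl]
    exact ih hF (by omega) x p

/-- Constancy of a slice whose `pd` vanishes identically (in `p`, at fixed `x`). -/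
lemma slice_const {F : Fn} {M : ℕ} (hF : SmoothUpTo F M) (k : ℕ) (x : ℝ) (p : ℕ → ℝ)
    (hzero : ∀ q, pd k F x q = 0) (t : ℝ) :
    F x (Function.update p k t) = F x p := by
  have hd : ∀ s : ℝ, HasDerivAt (fun t => F x (Function.update p k t)) 0 s := by
    intro s
    have h := pd_hasDerivAt hF k x p s
    rwa [hzero] at h
  have hconst := is_const_of_deriv_eq_zero (f := fun t => F x (Function.update p k t))
    (fun s => (hd s).differentiableAt) (fun s => (hd s).deriv) t (p k)
  rwa [Function.update_eq_self] at hconst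

end Operators2
/-! ### The core computation -/

noncomputable section CoreComputation

open Set Function

lemma core_identity (a : ℕ) (f L L2 Lt2 Lt : Fn)
    (hf : SmoothUpTo f (a+3)) (hL : SmoothUpTo L (a+3))
    (hL2 : SmoothUpTo L2 (a+2)) (hLt2 : SmoothUpTo Lt2 (a+2))
    (hLt : ∀ x p, Lt x p = D (a+2) (pint (a+2) L) x p + ((-1:ℝ)^(a+2) * pint2 (a+2) f x p
        + (L2 x p * p (a+2) + Lt2 x p))) :
    ∀ x p, E (2*a+4) (a+3) (fun y q => L y q * q (a+3) + Lt y q) x p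
      = f x p * p (2*a+4) + (-1:ℝ)^(a+2) * E (2*a+3) (a+2) (pint2 (a+2) f) x p
        + E (2*a+2) (a+2) (fun y q => L2 y q * q (a+2) + Lt2 y q) x p := by
  intro x p
  have hP : SmoothUpTo (pint (a+2) L) (a+3) := smoothUpTo_pint hL (by omega)
  have hWi : SmoothUpTo (pint (a+2) f) (a+3) := smoothUpTo_pint hf (by omega)
  have hpint2 : pint2 (a+2) f = pint (a+2) (pint (a+2) f) := rfl
  have hWs : SmoothUpTo (pint2 (a+2) f) (a+3) := by
    rw [hpint2]; exact smoothUpTo_pint hWi (by omega)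
  have hΨs : SmoothUpTo (fun y q => L2 y q * q (a+2) + Lt2 y q) (a+3) := by
    apply smoothUpTo_add
    · exact smoothUpTo_mul (smoothUpTo_mono hL2 (by omega))
        (smoothUpTo_mono (smoothUpTo_coord (a+2)) (by omega))
    · exact smoothUpTo_mono hLt2 (by omega)
  have hcWs : SmoothUpTo (fun y q => (-1:ℝ)^(a+2) * pint2 (a+2) f y q) (a+3) :=
    smoothUpTo_const_mul _ hWs
  have hΘs : SmoothUpTo (fun y q => (-1:ℝ)^(a+2) * pint2 (a+2) f y q +
      (L2 y q * q (a+2) + Lt2 y q)) (a+3) := by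
    apply smoothUpTo_add hcWs hΨs
  -- Step 1: Lagrangian decomposition
  have hDP : ∀ y q, D (2*a+4) (pint (a+2) L) y q
      = D (a+2) (pint (a+2) L) y q + q (a+3) * L y q := by
    intro y q
    rw [D_split (by omega : a+2 ≤ 2*a+4) y q]
    congr 1
    rw [Finset.sum_eq_single (a+2)]
    · rw [pd_pint_self hL (by omega) y q]
    · intro b hb hbne
      have hb' := Finset.mem_Ico.1 hb
      rw [pd_zero (dependsOn_pint hL.1 (by omega)) (by omega) y q, mul_zero]
    · intro hmem
      exact absurd (Finset.mem_Ico.2 (by omega)) hmem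
  have hΛ : (fun y q => L y q * q (a+3) + Lt y q)
      = fun y q => D (2*a+4) (pint (a+2) L) y q +
          ((-1:ℝ)^(a+2) * pint2 (a+2) f y q + (L2 y q * q (a+2) + Lt2 y q)) := by
    funext y q
    rw [hLt y q, hDP y q]
    ring
  rw [hΛ]
  -- Step 2,3: E kills the total derivative part
  rw [E_add (smoothUpTo_D hP (2*a+4)) hΘs (2*a+4) (a+3) x p]
  rw [E_D_zero hP (le_refl (a+3)) (by omega) x p, zero_add]
  -- Step 4: drop the top term of E (the summand k = a+3 vanishes)
  have hstep4 : E (2*a+4) (a+3) (fun y q => (-1:ℝ)^(a+2) * pint2 (a+2) f y q +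
      (L2 y q * q (a+2) + Lt2 y q)) x p
      = E (2*a+4) (a+2) (fun y q => (-1:ℝ)^(a+2) * pint2 (a+2) f y q +
      (L2 y q * q (a+2) + Lt2 y q)) x p := by
    have h := E_succ (2*a+4) (a+2) (fun y q => (-1:ℝ)^(a+2) * pint2 (a+2) f y q +
      (L2 y q * q (a+2) + Lt2 y q)) x p
    have hpdΘ : pd (a+3) (fun y q => (-1:ℝ)^(a+2) * pint2 (a+2) f y q +
        (L2 y q * q (a+2) + Lt2 y q)) = fun _ _ => (0:ℝ) := by
      funext y q
      exact pd_zero hΘs.1 (le_refl (a+3)) y q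
    rw [hpdΘ, D_iter_zero_fn] at h
    show E (2*a+4) (a+2+1) _ x p = _
    rw [h]
    simp
  rw [hstep4]
  -- Step 5: split Θ
  rw [E_add hcWs hΨs (2*a+4) (a+2) x p]
  rw [E_const_mul ((-1:ℝ)^(a+2)) (pint2 (a+2) f) (2*a+4) (a+2) x p]
  -- Step 6: compare truncations on the double primitive
  have hpdW : pd (a+2) (pint2 (a+2) f) = pint (a+2) f := by
    funext y q
    rw [hpint2]
    exact pd_pint_self hWi (by omega) y q
  have hstep6 : E (2*a+4) (a+2) (pint2 (a+2) f) x p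
      = E (2*a+3) (a+2) (pint2 (a+2) f) x p + (-1:ℝ)^(a+2) * (p (2*a+4) * f x p) := by
    have hterm : ∀ k ∈ Finset.range (a+3),
        (-1:ℝ)^k * ((D (2*a+4))^[k] (pd k (pint2 (a+2) f))) x p
        = (-1:ℝ)^k * ((D (2*a+3))^[k] (pd k (pint2 (a+2) f))) x p
          + (if k = a+2 then (-1:ℝ)^(a+2) * (p (2*a+4) * f x p) else 0) := by
      intro k hk
      rcases Nat.lt_or_ge k (a+2) with h | h
      · rw [D_iter_trunc (dependsOn_pd hWs.1 k) k (2*a+4) (2*a+3) (by omega) (by omega) x p,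
          if_neg (by omega)]
        ring
      · have hk2 : k = a+2 := by
          have := Finset.mem_range.1 hk
          omega
        subst hk2
        rw [if_pos rfl]
        have e1 : ((D (2*a+4))^[a+2] (pd (a+2) (pint2 (a+2) f)))
            = D (2*a+4) ((D (2*a+4))^[a+1] (pd (a+2) (pint2 (a+2) f))) :=
          Function.iterate_succ_apply' _ _ _
        have e6 : ((D (2*a+3))^[a+2] (pd (a+2) (pint2 (a+2) f)))
            = D (2*a+3) ((D (2*a+3))^[a+1] (pd (a+2) (pint2 (a+2) f))) :=
          Function.iterate_succ_apply' _ _ _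
        have e2 : (D (2*a+4))^[a+1] (pd (a+2) (pint2 (a+2) f))
            = (D (2*a+3))^[a+1] (pd (a+2) (pint2 (a+2) f)) := by
          funext y q
          exact D_iter_trunc (dependsOn_pd hWs.1 (a+2)) (a+1) (2*a+4) (2*a+3)
            (by omega) (by omega) y q
        have e3 : D (2*a+4) ((D (2*a+3))^[a+1] (pd (a+2) (pint2 (a+2) f))) x p
            = D (2*a+3) ((D (2*a+3))^[a+1] (pd (a+2) (pint2 (a+2) f))) x p
              + p (2*a+4) * pd (2*a+3) ((D (2*a+3))^[a+1] (pd (a+2) (pint2 (a+2) f))) x p := by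
          rw [D_split (by omega : 2*a+3 ≤ 2*a+4) x p]
          congr 1
          rw [show Finset.Ico (2*a+3) (2*a+4) = {2*a+3} from by
            rw [show 2*a+4 = (2*a+3)+1 from rfl, Finset.Ico_add_one_right_eq_Icc, Finset.Icc_self]]
          rw [Finset.sum_singleton]
        have e4 : pd (2*a+3) ((D (2*a+3))^[a+1] (pd (a+2) (pint2 (a+2) f))) x p
            = pd (a+2) (pd (a+2) (pint2 (a+2) f)) x p := by
          have h4 := pd_top_iter (a+2) (2*a+3) (smoothUpTo_pd hWs (a+2)) (a+1) (by omega) x p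
          rwa [show (a+2)+(a+1) = 2*a+3 from by omega] at h4
        have e5 : pd (a+2) (pd (a+2) (pint2 (a+2) f)) x p = f x p := by
          rw [hpdW]
          exact pd_pint_self hf (by omega) x p
        rw [e1, e2, e3, e4, e5, e6]
        ring
    show (∑ k ∈ Finset.range (a+3), _) = _
    rw [Finset.sum_congr rfl hterm, Finset.sum_add_distrib, Finset.sum_ite_eq'
      (Finset.range (a+3)) (a+2) (fun _ => (-1:ℝ)^(a+2) * (p (2*a+4) * f x p))]
    rw [if_pos (Finset.mem_range.2 (by omega))]
    rfl
  rw [hstep6]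
  -- Step 7: reduce the truncation order on Ψ
  have hQs : SmoothUpTo (pint (a+1) L2) (a+2) := smoothUpTo_pint hL2 (by omega)
  have hDQ : ∀ (m' : ℕ), a+2 ≤ m' → ∀ y q, D m' (pint (a+1) L2) y q
      = D (a+1) (pint (a+1) L2) y q + q (a+2) * L2 y q := by
    intro m' hm' y q
    rw [D_split (by omega : a+1 ≤ m') y q]
    congr 1
    rw [Finset.sum_eq_single (a+1)]
    · rw [pd_pint_self hL2 (by omega) y q]
    · intro b hb hbne
      have hb' := Finset.mem_Ico.1 hb
      rw [pd_zero (dependsOn_pint hL2.1 (by omega)) (by omega) y q, mul_zero]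
    · intro hmem
      exact absurd (Finset.mem_Ico.2 (by omega)) hmem
  have hRs : SmoothUpTo (fun y q => Lt2 y q - D (a+1) (pint (a+1) L2) y q) (a+2) := by
    apply smoothUpTo_sub hLt2
    have h := smoothUpTo_D hQs (a+1)
    rwa [show max (a+2) (a+1+1) = a+2 from by omega] at h
  have hΨsplit : ∀ (m' : ℕ), a+2 ≤ m' →
      (fun y q => L2 y q * q (a+2) + Lt2 y q)
        = fun y q => D m' (pint (a+1) L2) y q +
            (fun y q => Lt2 y q - D (a+1) (pint (a+1) L2) y q) y q := by
    intro m' hm'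
    funext y q
    show L2 y q * q (a+2) + Lt2 y q = _
    rw [hDQ m' hm' y q]
    ring
  have hstep7 : ∀ (m' : ℕ), a+2 ≤ m' →
      E m' (a+2) (fun y q => L2 y q * q (a+2) + Lt2 y q) x p
        = E m' (a+2) (fun y q => Lt2 y q - D (a+1) (pint (a+1) L2) y q) x p := by
    intro m' hm'
    rw [hΨsplit m' hm']
    rw [E_add (smoothUpTo_D hQs m') hRs m' (a+2) x p]
    rw [E_D_zero hQs (le_refl (a+2)) (by omega) x p, zero_add]
  have hstep7b : E (2*a+4) (a+2) (fun y q => Lt2 y q - D (a+1) (pint (a+1) L2) y q) x p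
      = E (2*a+2) (a+2) (fun y q => Lt2 y q - D (a+1) (pint (a+1) L2) y q) x p := by
    show (∑ k ∈ Finset.range (a+3), _) = ∑ k ∈ Finset.range (a+3), _
    apply Finset.sum_congr rfl
    intro k hk
    rcases Nat.lt_or_ge k (a+2) with h | h
    · rw [D_iter_trunc (dependsOn_pd hRs.1 k) k (2*a+4) (2*a+2) (by omega) (by omega) x p]
    · have hk2 : k = a+2 := by
        have := Finset.mem_range.1 hk
        omega
      subst hk2
      have hz : pd (a+2) (fun y q => Lt2 y q - D (a+1) (pint (a+1) L2) y q)
          = fun _ _ => (0:ℝ) := by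
        funext y q
        exact pd_zero hRs.1 (le_refl _) y q
      rw [hz, D_iter_zero_fn, D_iter_zero_fn]
  rw [hstep7 (2*a+4) (by omega), hstep7b, ← hstep7 (2*a+2) (by omega)]
  have hsq : ((-1:ℝ)^(a+2)) * ((-1:ℝ)^(a+2)) = 1 := by
    rw [← pow_add]
    exact Even.neg_one_pow ⟨a+2, by ring⟩
  linear_combination (p (2*a+4) * f x p) * hsq

end CoreComputation
/-- (Reduction lemma, Lemma 5.1.)  Let `n ≥ 3`.
(i) Given smooth `L_{n-1}`, `L̃_{n-1}`, setting
`f_{n-1} = (-1)^{n-1} ∂_{n-1}² (L̃_{n-1} - D_{n-1} ∫^{p_{n-1}} L_{n-1})`, there are smooth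
`L_{n-2}`, `L̃_{n-2}` such that
`E_{2n-2}^n (L_{n-1} p_n + L̃_{n-1}) = f_{n-1} p_{2n-2} + (-1)^{n-1} E_{2n-3}^{n-1} ∫^{p_{n-1}}∫ f_{n-1} + E_{2n-4}^{n-1} (L_{n-2} p_{n-1} + L̃_{n-2})`.
(ii) Conversely, given smooth `f_{n-1}, L_{n-1}, L_{n-2}, L̃_{n-2}`, there is a smooth
`L̃_{n-1}` such that the same identity holds. -/
theorem reduction_lemma (n : ℕ) (hn : 3 ≤ n) :
    (∀ L Lt : Fn, SmoothUpTo L n → SmoothUpTo Lt n →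
      ∀ f : Fn,
        (∀ x p, f x p = (-1 : ℝ) ^ (n - 1) *
            pd (n - 1) (pd (n - 1)
              (fun y q => Lt y q - D (n - 1) (pint (n - 1) L) y q)) x p) →
        ∃ L2 Lt2 : Fn, SmoothUpTo L2 (n - 1) ∧ SmoothUpTo Lt2 (n - 1) ∧
          ∀ x p, E (2 * n - 2) n (fun y q => L y q * q n + Lt y q) x p =
            f x p * p (2 * n - 2) +
              (-1 : ℝ) ^ (n - 1) * E (2 * n - 3) (n - 1) (pint2 (n - 1) f) x p +
              E (2 * n - 4) (n - 1) (fun y q => L2 y q * q (n - 1) + Lt2 y q) x p) ∧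
    (∀ f L L2 Lt2 : Fn, SmoothUpTo f n → SmoothUpTo L n →
      SmoothUpTo L2 (n - 1) → SmoothUpTo Lt2 (n - 1) →
      ∃ Lt : Fn, SmoothUpTo Lt n ∧
        ∀ x p, E (2 * n - 2) n (fun y q => L y q * q n + Lt y q) x p =
          f x p * p (2 * n - 2) +
            (-1 : ℝ) ^ (n - 1) * E (2 * n - 3) (n - 1) (pint2 (n - 1) f) x p +
            E (2 * n - 4) (n - 1) (fun y q => L2 y q * q (n - 1) + Lt2 y q) x p) := by
  obtain ⟨a, rfl⟩ : ∃ a, n = a + 3 := ⟨n - 3, by omega⟩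
  have i1 : a + 3 - 1 = a + 2 := by omega
  have i2 : 2 * (a + 3) - 2 = 2 * a + 4 := by omega
  have i3 : 2 * (a + 3) - 3 = 2 * a + 3 := by omega
  have i4 : 2 * (a + 3) - 4 = 2 * a + 2 := by omega
  simp only [i1, i2, i3, i4]
  constructor
  · -- part (i)
    intro L Lt hL hLt f hfdef
    have hPL : SmoothUpTo (pint (a+2) L) (a+3) := smoothUpTo_pint hL (by omega)
    have hDPL : SmoothUpTo (D (a+2) (pint (a+2) L)) (a+3) := by
      have h := smoothUpTo_D hPL (a+2)
      rwa [show max (a+3) (a+2+1) = a+3 from by omega] at h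
    set G0 : Fn := fun y q => Lt y q - D (a+2) (pint (a+2) L) y q with hG0def
    have hG0s : SmoothUpTo G0 (a+3) := smoothUpTo_sub hLt hDPL
    have hfeq : f = fun x p => (-1:ℝ)^(a+2) * pd (a+2) (pd (a+2) G0) x p :=
      funext fun x => funext fun p => hfdef x p
    subst hfeq
    set fF : Fn := fun x p => (-1:ℝ)^(a+2) * pd (a+2) (pd (a+2) G0) x p with hfFdef
    have hfs : SmoothUpTo fF (a+3) :=
      smoothUpTo_const_mul _ (smoothUpTo_pd (smoothUpTo_pd hG0s (a+2)) (a+2))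
    have hWi : SmoothUpTo (pint (a+2) fF) (a+3) := smoothUpTo_pint hfs (by omega)
    have hWs : SmoothUpTo (pint2 (a+2) fF) (a+3) := by
      have h : pint2 (a+2) fF = pint (a+2) (pint (a+2) fF) := rfl
      rw [h]
      exact smoothUpTo_pint hWi (by omega)
    have hcWs : SmoothUpTo (fun y q => (-1:ℝ)^(a+2) * pint2 (a+2) fF y q) (a+3) :=
      smoothUpTo_const_mul _ hWs
    set N : Fn := fun y q => G0 y q - (-1:ℝ)^(a+2) * pint2 (a+2) fF y q with hNdef
    have hNs : SmoothUpTo N (a+3) := smoothUpTo_sub hG0s hcWs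
    have hpdW : pd (a+2) (pint2 (a+2) fF) = pint (a+2) fF := by
      funext y q
      have h : pint2 (a+2) fF = pint (a+2) (pint (a+2) fF) := rfl
      rw [h]
      exact pd_pint_self hWi (by omega) y q
    have hsq : ((-1:ℝ)^(a+2)) * ((-1:ℝ)^(a+2)) = 1 := by
      rw [← pow_add]
      exact Even.neg_one_pow ⟨a+2, by ring⟩
    have hpdN : pd (a+2) N = fun y q =>
        pd (a+2) G0 y q - (-1:ℝ)^(a+2) * pint (a+2) fF y q := by
      funext y q
      rw [hNdef]
      rw [pd_sub_pt hG0s hcWs (a+2) y q]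
      rw [pd_const_mul ((-1:ℝ)^(a+2)) (pint2 (a+2) fF) (a+2)]
      show pd (a+2) G0 y q - (-1:ℝ)^(a+2) * pd (a+2) (pint2 (a+2) fF) y q = _
      rw [hpdW]
    have hppN : ∀ y q, pd (a+2) (pd (a+2) N) y q = 0 := by
      intro y q
      rw [hpdN]
      have hsm1 : SmoothUpTo (pd (a+2) G0) (a+3) := smoothUpTo_pd hG0s (a+2)
      have hsm2 : SmoothUpTo (fun y q => (-1:ℝ)^(a+2) * pint (a+2) fF y q) (a+3) :=
        smoothUpTo_const_mul _ hWi
      rw [pd_sub_pt hsm1 hsm2 (a+2) y q]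
      rw [pd_const_mul ((-1:ℝ)^(a+2)) (pint (a+2) fF) (a+2)]
      show pd (a+2) (pd (a+2) G0) y q -
        (-1:ℝ)^(a+2) * pd (a+2) (pint (a+2) fF) y q = 0
      rw [pd_pint_self hfs (by omega) y q]
      show pd (a+2) (pd (a+2) G0) y q -
        (-1:ℝ)^(a+2) * ((-1:ℝ)^(a+2) * pd (a+2) (pd (a+2) G0) y q) = 0
      linear_combination (-(pd (a+2) (pd (a+2) G0) y q)) * hsq
    set A : Fn := pd (a+2) N with hAdef
    have hAs : SmoothUpTo A (a+3) := smoothUpTo_pd hNs (a+2)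
    have hAconst : ∀ y q t, A y (Function.update q (a+2) t) = A y q := by
      intro y q t
      exact slice_const hAs (a+2) y q (fun q' => hppN y q') t
    have hAdep : FnDependsOn A (a+2) := by
      intro y q r hqr
      calc A y q = A y (Function.update q (a+2) 0) := (hAconst y q 0).symm
        _ = A y (Function.update r (a+2) 0) := by
            apply hAs.1
            intro i hi
            rw [Function.update_apply, Function.update_apply]
            by_cases hik : i = a+2
            · simp [hik]
            · simp only [if_neg hik]
              exact hqr i (by omega)
        _ = A y r := hAconst y r 0
    have hA2 : SmoothUpTo A (a+2) := smoothUpTo_down hAs hAdep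
    set B : Fn := fun y q => N y q - A y q * q (a+2) with hBdef
    have hBkey : ∀ y q, B y q = N y (Function.update q (a+2) 0) := by
      intro y q
      have hder : ∀ s : ℝ, HasDerivAt
          (fun t => N y (Function.update q (a+2) t) - A y q * t) 0 s := by
        intro s
        have h1 := pd_hasDerivAt hNs (a+2) y q s
        have h2 : HasDerivAt (fun t : ℝ => A y q * t) (A y q) s := by
          simpa using (hasDerivAt_id s).const_mul (A y q)
        have h3 := h1.sub h2
        have h4 : pd (a+2) N y (Function.update q (a+2) s) - A y q = 0 := by
          show A y (Function.update q (a+2) s) - A y q = 0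
          rw [hAconst y q s, sub_self]
        rwa [h4] at h3
      have hconst := is_const_of_deriv_eq_zero (fun s => (hder s).differentiableAt)
        (fun s => (hder s).deriv) (q (a+2)) 0
      rw [Function.update_eq_self] at hconst
      show N y q - A y q * q (a+2) = _
      have : N y q - A y q * q (a+2) = N y (Function.update q (a+2) 0) - A y q * 0 := hconst
      rw [this]
      ring
    have hBdep : FnDependsOn B (a+2) := by
      intro y q r hqr
      rw [hBkey y q, hBkey y r]
      apply hNs.1
      intro i hi
      rw [Function.update_apply, Function.update_apply]
      by_cases hik : i = a+2
      · simp [hik]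
      · simp only [if_neg hik]
        exact hqr i (by omega)
    have hBs : SmoothUpTo B (a+3) := by
      apply smoothUpTo_sub hNs
      exact smoothUpTo_mul hAs (smoothUpTo_mono (smoothUpTo_coord (a+2)) (by omega))
    have hB2 : SmoothUpTo B (a+2) := smoothUpTo_down hBs hBdep
    refine ⟨A, B, hA2, hB2, ?_⟩
    apply core_identity a fF L A B Lt hfs hL hA2 hB2
    intro x p
    have h1 : G0 x p = Lt x p - D (a+2) (pint (a+2) L) x p := by rw [hG0def]
    have h2 : N x p = G0 x p - (-1:ℝ)^(a+2) * pint2 (a+2) fF x p := by rw [hNdef]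
    have h3 : B x p = N x p - A x p * p (a+2) := by rw [hBdef]
    have := h1
    rw [h2] at h3
    linarith [h3, h1]
  · -- part (ii)
    intro f L L2 Lt2 hf hL hL2 hLt2
    refine ⟨fun x p => D (a+2) (pint (a+2) L) x p + ((-1:ℝ)^(a+2) * pint2 (a+2) f x p
      + (L2 x p * p (a+2) + Lt2 x p)), ?_, ?_⟩
    · apply smoothUpTo_add
      · have h := smoothUpTo_D (smoothUpTo_pint hL (by omega : a+2 < a+3)) (a+2)
        rwa [show max (a+3) (a+2+1) = a+3 from by omega] at h
      · apply smoothUpTo_add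
        · apply smoothUpTo_const_mul
          have hWi := smoothUpTo_pint hf (by omega : a+2 < a+3)
          have h : pint2 (a+2) f = pint (a+2) (pint (a+2) f) := rfl
          rw [h]
          exact smoothUpTo_pint hWi (by omega)
        · apply smoothUpTo_add
          · exact smoothUpTo_mul (smoothUpTo_mono hL2 (by omega))
              (smoothUpTo_mono (smoothUpTo_coord (a+2)) (by omega))
          · exact smoothUpTo_mono hLt2 (by omega)
    · exact core_identity a f L L2 Lt2 _ hf hL hL2 hLt2 (fun x p => rfl)
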